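/- Let n ∈ ℕ, r ≥ p−1, and let m_0,…,m_r be Walsh polynomials of order p^n − 1 with polyphase components μ_{ν,s}. Then for all ν, ν' ∈ {0,…,r} and every ω ∈ G: Σ_{k=0}^{p−1} m_ν(ω ⊕ δ_k) conj(m_{ν'}(ω ⊕ δ_k)) = Σ_{k=0}^{p−1} μ_{ν,k}(Aω) conj(μ_{ν',k}(Aω)). -/

import Mathlib

/-!
Split the coefficients of a Walsh polynomial by the residue `s` of `α` modulo `p`. Since
`W_{pβ+s}(x) = W_s(x) W_β(Ax)`, `W_s(x) = exp(2πi x₁ s / p)`, and `W_β(Ax)` does not see the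
coordinate `x₁`, the value `m_ν(ω ⊕ δ_k)` is the discrete Fourier transform on `ℤ/p`, evaluated
at `ω₁ + k`, of `s ↦ μ_{ν,s}(Aω) / √p`. Summing over `k` runs over all of `ℤ/p`, so the identity
is Parseval's identity for that transform.
-/

open MeasureTheory Filter Topology Matrix

noncomputable section

namespace Vilenkin

/-- The underlying additive subgroup of `ℤ → ZMod p` consisting of sequences that
vanish for all sufficiently small indices. -/
def VilSub (p : ℕ) : AddSubgroup (ℤ → ZMod p) where
  carrier := {x | ∃ k : ℤ, ∀ j < k, x j = 0}
  zero_mem' := ⟨0, fun _ _ => rfl⟩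
  add_mem' := by
    rintro a b ⟨ka, hka⟩ ⟨kb, hkb⟩
    refine ⟨min ka kb, fun j hj => ?_⟩
    have h1 := hka j (lt_of_lt_of_le hj (min_le_left _ _))
    have h2 := hkb j (lt_of_lt_of_le hj (min_le_right _ _))
    show a j + b j = 0
    rw [h1, h2, add_zero]
  neg_mem' := by
    rintro a ⟨ka, hka⟩
    refine ⟨ka, fun j hj => ?_⟩
    show -a j = 0
    rw [hka j hj, neg_zero]

/-- The Vilenkin group `G = G_p`. -/
abbrev Vil (p : ℕ) := {x : ℤ → ZMod p // x ∈ VilSub p}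

/-- The (iterated) shift automorphism: `Ash p t x` is `A^t x`, with `(A x)_j = x_{j+1}`. -/
def Ash (p : ℕ) (t : ℤ) (x : Vil p) : Vil p :=
  ⟨fun j => x.1 (j + t), by
    obtain ⟨k, hk⟩ := x.2
    exact ⟨k - t, fun j hj => hk (j + t) (by omega)⟩⟩

/-- `λ(x) = Σ_j x_j p^{-j}`. -/
def lam (p : ℕ) (x : Vil p) : ℝ := ∑' j : ℤ, ((x.1 j).val : ℝ) * (p : ℝ) ^ (-j)

/-- `λ` restricted to `H` with values in `ℕ`:  `Σ_{i ≥ 0} x_{-i} p^i`. -/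
def lamNat (p : ℕ) (x : Vil p) : ℕ := ∑' i : ℕ, (x.1 (-(i : ℤ))).val * p ^ i

/-- The element `h_[α]` of `H` with `λ(h_[α]) = α` (base-`p` digits of `α`). -/
def hElt (p : ℕ) (α : ℕ) : Vil p :=
  ⟨fun j => if j ≤ 0 then ((α / p ^ (-j).toNat : ℕ) : ZMod p) else 0, by
    refine ⟨-(α : ℤ), fun j hj => ?_⟩
    have hj0 : j ≤ 0 := by omega
    show (if j ≤ 0 then ((α / p ^ (-j).toNat : ℕ) : ZMod p) else 0) = 0
    rw [if_pos hj0]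
    rcases Nat.lt_or_ge p 2 with hp | hp
    · interval_cases p
      · have hn : (-j).toNat ≠ 0 := by omega
        simp [zero_pow hn]
      · exact Subsingleton.elim _ _
    · have hn : α < (-j).toNat := by omega
      have h2 : α < 2 ^ (-j).toNat := lt_trans hn (by first | exact Nat.lt_two_pow_self | exact Nat.lt_two_pow_self _)
      have hpow : α < p ^ (-j).toNat :=
        lt_of_lt_of_le h2 (Nat.pow_le_pow_left hp _)
      rw [Nat.div_eq_of_lt hpow]
      simp⟩

/-- The character `χ(x, ω) = exp((2πi/p) Σ_j x_j ω_{1-j})`. -/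
def chi (p : ℕ) (x ω : Vil p) : ℂ :=
  Complex.exp ((2 * Real.pi * Complex.I / p) *
    ∑' j : ℤ, (((x.1 j).val : ℂ) * ((ω.1 (1 - j)).val : ℂ)))

/-- The generalized Walsh function `W_α(x) = χ(x, h_[α])`. -/
def Walsh (p : ℕ) (α : ℕ) (x : Vil p) : ℂ := chi p x (hElt p α)

/-- The element `δ_l` of `G` with `λ(δ_l) = l / p`. -/
def deltaElt (p : ℕ) (l : ℕ) : Vil p :=
  ⟨fun j => if j = 1 then (l : ZMod p) else 0, ⟨1, fun j hj => if_neg (by omega)⟩⟩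

/-- `U_l = {x : x_j = 0 for j ≤ l}`. -/
def Uball (p : ℕ) (l : ℤ) : Set (Vil p) := {x | ∀ j ≤ l, x.1 j = 0}

/-- `U = U_0`. -/
def Uset (p : ℕ) : Set (Vil p) := Uball p 0

/-- `H = {x : x_j = 0 for j > 0}`. -/
def Hset (p : ℕ) : Set (Vil p) := {x | ∀ j : ℤ, 0 < j → x.1 j = 0}

/-- The non-Archimedean norm `‖x‖ = p^{-k(x)}`, `‖θ‖ = 0`. -/
def vnorm (p : ℕ) (x : Vil p) : ℝ := ⨆ j : ℤ, (if x.1 j ≠ 0 then (p : ℝ) ^ (-j) else 0)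

/-- The Vilenkin topology, generated by the cosets of the subgroups `U_l`. -/
instance (p : ℕ) : TopologicalSpace (Vil p) :=
  TopologicalSpace.generateFrom
    {S | ∃ (x : Vil p) (l : ℤ), S = {y : Vil p | ∀ j ≤ l, y.1 j = x.1 j}}

instance (p : ℕ) : MeasurableSpace (Vil p) := borel (Vil p)

/-- `μ` is the Haar measure on `G`: translation invariant and normalized by `μ(U) = 1`. -/
def IsHaar (p : ℕ) (μ : Measure (Vil p)) : Prop :=
  (∀ (a : Vil p) (s : Set (Vil p)), μ ((fun x => a + x) ⁻¹' s) = μ s) ∧ μ (Uset p) = 1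

/-- The Fourier transform (integral form) `f̂(ω) = ∫ f(x) conj χ(x,ω) dμ(x)`. -/
def FT (p : ℕ) (μ : Measure (Vil p)) (f : Vil p → ℂ) (ω : Vil p) : ℂ :=
  ∫ x, f x * (starRingEnd ℂ) (chi p x ω) ∂μ

/-- The `L²` inner product `⟨f, g⟩ = ∫ f conj g dμ`. -/
def ip (p : ℕ) (μ : Measure (Vil p)) (f g : Vil p → ℂ) : ℂ :=
  ∫ x, f x * (starRingEnd ℂ) (g x) ∂μ

/-- The dilated-translated system `ψ_{j,k}(x) = p^{j/2} ψ(A^j x ⊖ h_[k])`. -/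
def wsys (p : ℕ) (ψ : Vil p → ℂ) (j : ℤ) (k : ℕ) (x : Vil p) : ℂ :=
  ((Real.sqrt p ^ j : ℝ) : ℂ) * ψ (Ash p j x - hElt p k)

/-- `m` is the Walsh polynomial of order `p^n - 1` with coefficients `a`. -/
def IsWalshPolyOfOrder (p n : ℕ) (a : ℕ → ℂ) (m : Vil p → ℂ) : Prop :=
  ∀ ω, m ω = ∑ α ∈ Finset.range (p ^ n), a α * (starRingEnd ℂ) (Walsh p α ω)

/-- `m` is a Walsh polynomial. -/
def IsWalshPoly (p : ℕ) (m : Vil p → ℂ) : Prop :=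
  ∃ n a, IsWalshPolyOfOrder p n a m

/-- The polyphase component `μ_{ν,s}(ω) = √p Σ_{α < p^{n-1}} a_{pα+s} conj W_α(ω)`. -/
def polyphase (p n : ℕ) (a : ℕ → ℂ) (s : ℕ) (ω : Vil p) : ℂ :=
  (Real.sqrt p : ℂ) *
    ∑ α ∈ Finset.range (p ^ (n - 1)), a (p * α + s) * (starRingEnd ℂ) (Walsh p α ω)

/-- The matrix `M(ω)` with entries `M(ω)_{l,ν} = m_ν(ω ⊕ δ_l)`. -/
def MaskMatrix (p r : ℕ) (m : Fin (r + 1) → Vil p → ℂ) (ω : Vil p) :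
    Matrix (Fin p) (Fin (r + 1)) ℂ :=
  Matrix.of fun l ν => m ν (ω + deltaElt p (l : ℕ))

/-- The unitary extension condition `M(ω) M(ω)* = I_p` for all `ω`. -/
def UEP (p r : ℕ) (m : Fin (r + 1) → Vil p → ℂ) : Prop :=
  ∀ ω : Vil p, MaskMatrix p r m ω * (MaskMatrix p r m ω)ᴴ = 1

/-- Condition (*): `Σ_{l<p} |m_0(ω ⊕ δ_l)|² ≤ 1` for all `ω`. -/
def StarCond (p : ℕ) (m0 : Vil p → ℂ) : Prop :=
  ∀ ω : Vil p, ∑ l ∈ Finset.range p, ‖m0 (ω + deltaElt p l)‖ ^ 2 ≤ 1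

/-- `φ` satisfies the refinement equation with coefficients `a` (of length `p^n`). -/
def RefinableWithMask (p n : ℕ) (a : ℕ → ℂ) (φ : Vil p → ℂ) : Prop :=
  ∀ x, φ x = p * ∑ α ∈ Finset.range (p ^ n), a α * φ (Ash p 1 x - hElt p α)

/-- The coset `U_{n,l} = A^{-n}(h_[l]) ⊕ A^{-n}(U)`. -/
def Unl (p : ℕ) (n l : ℕ) : Set (Vil p) :=
  (fun u => Ash p (-(n : ℤ)) (hElt p l) + Ash p (-(n : ℤ)) u) '' Uset p

/-- Membership in the Sobolev space `W₂^m`, phrased in terms of (a representative of)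
the Fourier transform `fhat` of `f`. -/
def MemW2 (p : ℕ) (μ : Measure (Vil p)) (m : ℕ) (fhat : Vil p → ℂ) : Prop :=
  ∀ k ≤ m, Integrable (fun ω => vnorm p ω ^ (2 * k) * ‖fhat ω‖ ^ 2) μ

/-- The Sobolev norm `‖f‖_{2,m}`, phrased via the Fourier transform `fhat` of `f`. -/
def sobNorm (p : ℕ) (μ : Measure (Vil p)) (m : ℕ) (fhat : Vil p → ℂ) : ℝ :=
  ∑ k ∈ Finset.range (m + 1), Real.sqrt (∫ ω, vnorm p ω ^ (2 * k) * ‖fhat ω‖ ^ 2 ∂μ)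

end Vilenkin
namespace Vilenkin

open Finset ComplexConjugate
open ZMod (stdAddChar)

lemma sum_range_mul_eq_sum_sum {M : Type*} [AddCommMonoid M] (f : ℕ → M) (p q : ℕ) :
    ∑ α ∈ range (p * q), f α = ∑ s ∈ range p, ∑ β ∈ range q, f (p * β + s) := by
  induction q with
  | zero => simp
  | succ q ih =>
    rw [Nat.mul_succ, sum_range_add, ih, ← sum_add_distrib]
    exact sum_congr rfl fun s _ => (sum_range_succ _ q).symm

section Characters

variable {p : ℕ} [NeZero p]

lemma sum_range_natCast {M : Type*} [AddCommMonoid M] (F : ZMod p → M) :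
    ∑ k ∈ range p, F k = ∑ x, F x :=
  sum_nbij' (fun k => (k : ZMod p)) ZMod.val (by simp) (fun x _ => mem_range.2 x.val_lt)
    (fun k hk => ZMod.val_cast_of_lt (mem_range.1 hk)) (fun x _ => ZMod.natCast_zmod_val x)
    (fun _ _ => rfl)

lemma sum_range_stdAddChar_add_mul (c t : ZMod p) :
    ∑ k ∈ range p, stdAddChar ((c + (k : ZMod p)) * t) = if t = 0 then (p : ℂ) else 0 := by
  rw [sum_range_natCast (fun x => stdAddChar ((c + x) * t)),
    Fintype.sum_equiv (Equiv.addLeft c) (fun x => stdAddChar ((c + x) * t))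
      (fun x => stdAddChar (x * t)) fun _ => rfl,
    AddChar.sum_mulShift t (ZMod.isPrimitive_stdAddChar p), ZMod.card, apply_ite Nat.cast,
    Nat.cast_zero]

lemma conj_stdAddChar (t : ZMod p) : conj (stdAddChar t) = stdAddChar (-t) := by
  rw [AddChar.starComp_apply (by simp [ZMod.ringChar_zmod_n, NeZero.pos]), AddChar.inv_apply]

lemma sum_range_dft_mul_conj_dft (c : ZMod p) (f g : ℕ → ℂ) :
    ∑ k ∈ range p,
        (∑ s ∈ range p, conj (stdAddChar ((c + (k : ZMod p)) * (s : ZMod p))) * f s) *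
          conj (∑ s ∈ range p, conj (stdAddChar ((c + (k : ZMod p)) * (s : ZMod p))) * g s)
      = p * ∑ s ∈ range p, f s * conj (g s) := by
  have horth : ∀ s ∈ range p, ∀ s' ∈ range p,
      ∑ k ∈ range p, conj (stdAddChar ((c + (k : ZMod p)) * (s : ZMod p))) *
          stdAddChar ((c + (k : ZMod p)) * (s' : ZMod p)) = if s = s' then (p : ℂ) else 0 := by
    intro s hs s' hs'
    have hsub : ((s' : ZMod p) - s = 0) ↔ s = s' := by
      rw [sub_eq_zero, ZMod.natCast_eq_natCast_iff', Nat.mod_eq_of_lt (mem_range.1 hs),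
        Nat.mod_eq_of_lt (mem_range.1 hs'), eq_comm]
    simp_rw [conj_stdAddChar, ← AddChar.map_add_eq_mul, neg_add_eq_sub, ← mul_sub]
    rw [sum_range_stdAddChar_add_mul]
    exact if_congr hsub rfl rfl
  calc _ = ∑ k ∈ range p, ∑ s ∈ range p, ∑ s' ∈ range p,
          conj (stdAddChar ((c + (k : ZMod p)) * (s : ZMod p))) *
            stdAddChar ((c + (k : ZMod p)) * (s' : ZMod p)) * (f s * conj (g s')) := by
        refine sum_congr rfl fun k _ => ?_
        rw [map_sum, sum_mul_sum]
        refine sum_congr rfl fun s _ => sum_congr rfl fun s' _ => ?_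
        rw [map_mul (starRingEnd ℂ), Complex.conj_conj]
        ring
    _ = ∑ s ∈ range p, ∑ s' ∈ range p,
          (if s = s' then (p : ℂ) else 0) * (f s * conj (g s')) := by
        rw [sum_comm]
        refine sum_congr rfl fun s hs => ?_
        rw [sum_comm]
        exact sum_congr rfl fun s' hs' => by rw [← sum_mul, horth s hs s' hs']
    _ = p * ∑ s ∈ range p, f s * conj (g s) := by
        simp_rw [ite_mul, zero_mul, sum_ite_eq, mul_sum]
        exact sum_congr rfl fun s hs => if_pos hs

end Characters

section Walsh

variable {p : ℕ}

lemma summable_val_mul_val (x y : Vil p) (c : ℤ) :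
    Summable fun j : ℤ => ((x.1 j).val : ℂ) * ((y.1 (c - j)).val : ℂ) := by
  obtain ⟨k, hk⟩ := x.2
  obtain ⟨l, hl⟩ := y.2
  refine summable_of_ne_finset_zero (s := Icc k (c - l)) fun j hj => ?_
  rw [mem_Icc, not_and_or, not_le, not_le] at hj
  rcases hj with hj | hj
  · rw [hk j hj, ZMod.val_zero, Nat.cast_zero, zero_mul]
  · rw [hl (c - j) (by omega), ZMod.val_zero, Nat.cast_zero, mul_zero]

lemma hElt_apply_of_pos (α : ℕ) {j : ℤ} (hj : 0 < j) : (hElt p α).1 j = 0 :=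
  if_neg (by omega)

lemma hElt_apply_zero (α : ℕ) : (hElt p α).1 0 = α := by
  simp [hElt]

lemma hElt_apply_of_neg_of_lt {s : ℕ} (hs : s < p) {j : ℤ} (hj : j < 0) :
    (hElt p s).1 j = 0 := by
  have : s < p ^ (-j).toNat := hs.trans_le (Nat.le_self_pow (by omega) p)
  simp [hElt, hj.le, Nat.div_eq_of_lt this]

lemma hElt_mul_add_apply_of_neg {s : ℕ} (hs : s < p) (β : ℕ) {j : ℤ} (hj : j < 0) :
    (hElt p (p * β + s)).1 j = (hElt p β).1 (j + 1) := by
  obtain ⟨m, rfl⟩ : ∃ m : ℕ, j = -(m + 1) := ⟨(-j - 1).toNat, by omega⟩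
  have hdiv : (p * β + s) / p ^ (m + 1) = β / p ^ m := by
    rw [pow_succ', ← Nat.div_div_eq_div_mul, Nat.mul_add_div (by omega), Nat.div_eq_of_lt hs,
      add_zero]
  simp only [hElt]
  rw [if_pos (by omega), if_pos (by omega), show (-(-((m : ℤ) + 1))).toNat = m + 1 by omega,
    show (-(-((m : ℤ) + 1) + 1)).toNat = m by omega, hdiv]

lemma walsh_of_lt [NeZero p] {s : ℕ} (hs : s < p) (x : Vil p) :
    Walsh p s x = stdAddChar (x.1 1 * (s : ZMod p)) := by
  have hexp : ∑' j : ℤ, ((x.1 j).val : ℂ) * (((hElt p s).1 (1 - j)).val : ℂ)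
      = ((x.1 1).val * s : ℕ) := by
    rw [tsum_eq_single 1 fun j hj => ?_]
    · simp [hElt_apply_zero, ZMod.val_cast_of_lt hs]
    · rcases lt_or_gt_of_ne hj with hj | hj
      · simp [hElt_apply_of_pos s (by omega : 0 < 1 - j)]
      · simp [hElt_apply_of_neg_of_lt hs (by omega : 1 - j < 0)]
  have hcast : x.1 1 * (s : ZMod p) = (((x.1 1).val * s : ℕ) : ZMod p) := by
    rw [Nat.cast_mul, ZMod.natCast_zmod_val]
  rw [Walsh, chi, hexp, hcast, ZMod.stdAddChar_apply, ZMod.toCircle_natCast]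
  congr 1
  ring

lemma walsh_mul_add {s : ℕ} (hs : s < p) (β : ℕ) (x : Vil p) :
    Walsh p (p * β + s) x = Walsh p s x * Walsh p β (Ash p 1 x) := by
  set g : ℤ → ℂ := fun j => ((x.1 j).val : ℂ) * (((hElt p β).1 (2 - j)).val : ℂ)
  have hshift : ∑' j : ℤ, (((Ash p 1 x).1 j).val : ℂ) * (((hElt p β).1 (1 - j)).val : ℂ)
      = ∑' j, g j := by
    rw [← (Equiv.addRight (1 : ℤ)).tsum_eq g]
    refine tsum_congr fun j => ?_
    simp only [g, Equiv.coe_addRight, show (2 : ℤ) - (j + 1) = 1 - j by ring]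
    rfl
  have hsplit : ∀ j : ℤ, ((x.1 j).val : ℂ) * (((hElt p (p * β + s)).1 (1 - j)).val : ℂ)
      = ((x.1 j).val : ℂ) * (((hElt p s).1 (1 - j)).val : ℂ) + g j := by
    intro j
    rcases lt_trichotomy j 1 with hj | rfl | hj
    · simp [g, hElt_apply_of_pos _ (by omega : 0 < 1 - j),
        hElt_apply_of_pos _ (by omega : 0 < 2 - j)]
    · simp [g, hElt_apply_zero, hElt_apply_of_pos β one_pos]
    · rw [hElt_mul_add_apply_of_neg hs β (by omega : 1 - j < 0),
        hElt_apply_of_neg_of_lt hs (by omega : 1 - j < 0), show 1 - j + 1 = 2 - j by ring]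
      simp [g]
  rw [Walsh, Walsh, Walsh, chi, chi, chi, ← Complex.exp_add, ← mul_add, hshift,
    ← (summable_val_mul_val x _ 1).tsum_add (summable_val_mul_val x _ 2), tsum_congr hsplit]

lemma walsh_ash_add_deltaElt (β k : ℕ) (x : Vil p) :
    Walsh p β (Ash p 1 (x + deltaElt p k)) = Walsh p β (Ash p 1 x) := by
  rw [Walsh, Walsh, chi, chi]
  congr 2
  refine tsum_congr fun j => ?_
  rcases eq_or_ne j 0 with rfl | hj
  · simp [hElt_apply_of_pos]
  · show (((x.1 (j + 1) + if j + 1 = 1 then (k : ZMod p) else 0).val : ℂ)) * _ = _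
    rw [if_neg (by omega), add_zero]
    rfl

end Walsh

lemma IsWalshPolyOfOrder.apply_add_deltaElt {p n : ℕ} [NeZero p] {a : ℕ → ℂ} {m : Vil p → ℂ}
    (hm : IsWalshPolyOfOrder p n a m) (hn : 1 ≤ n) (ω : Vil p) (k : ℕ) :
    m (ω + deltaElt p k) = ∑ s ∈ range p,
      conj (stdAddChar ((ω.1 1 + (k : ZMod p)) * (s : ZMod p))) *
        (polyphase p n a s (Ash p 1 ω) / Real.sqrt p) := by
  have hsqrt : (Real.sqrt p : ℂ) ≠ 0 := by simp [NeZero.ne p]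
  have hδ : (ω + deltaElt p k).1 1 = ω.1 1 + k := by
    show ω.1 1 + (if (1 : ℤ) = 1 then (k : ZMod p) else 0) = _
    rw [if_pos rfl]
  rw [hm, show p ^ n = p * p ^ (n - 1) by rw [← pow_succ']; congr; omega,
    sum_range_mul_eq_sum_sum]
  refine sum_congr rfl fun s hs => ?_
  rw [polyphase, mul_div_cancel_left₀ _ hsqrt, mul_sum]
  refine sum_congr rfl fun β _ => ?_
  rw [walsh_mul_add (mem_range.1 hs), walsh_of_lt (mem_range.1 hs), walsh_ash_add_deltaElt, hδ,
    map_mul]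
  ring

theorem statement6_general (p : ℕ) (hp : 2 ≤ p) (n : ℕ) (hn : 1 ≤ n) (r : ℕ)
    (a : Fin (r + 1) → ℕ → ℂ) (mks : Fin (r + 1) → Vil p → ℂ)
    (hmks : ∀ ν, IsWalshPolyOfOrder p n (a ν) (mks ν))
    (ν ν' : Fin (r + 1)) (ω : Vil p) :
    ∑ k ∈ Finset.range p,
        mks ν (ω + deltaElt p k) * (starRingEnd ℂ) (mks ν' (ω + deltaElt p k))
      = ∑ k ∈ Finset.range p,
          polyphase p n (a ν) k (Ash p 1 ω) *
            (starRingEnd ℂ) (polyphase p n (a ν') k (Ash p 1 ω)) := by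
  have : NeZero p := ⟨by omega⟩
  have hsqrt_ne : (Real.sqrt p : ℂ) ≠ 0 := by simp [NeZero.ne p]
  have hsqrt_sq : (Real.sqrt p : ℂ) ^ 2 = p := by
    rw [← Complex.ofReal_pow, Real.sq_sqrt (Nat.cast_nonneg p), Complex.ofReal_natCast]
  simp_rw [IsWalshPolyOfOrder.apply_add_deltaElt (hmks _) hn ω]
  rw [sum_range_dft_mul_conj_dft, mul_sum]
  refine sum_congr rfl fun s _ => ?_
  rw [map_div₀, Complex.conj_ofReal, ← hsqrt_sq]
  field_simp

/-- **Proposition 4, identity (2.11).**  For all `ν, ν'` and every `ω ∈ G`: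
`Σ_{k<p} m_ν(ω ⊕ δ_k) conj m_{ν'}(ω ⊕ δ_k) = Σ_{k<p} μ_{ν,k}(Aω) conj μ_{ν',k}(Aω)`. -/
theorem statement6 (p : ℕ) (hp : 2 ≤ p) (n : ℕ) (hn : 1 ≤ n) (r : ℕ) (hr : p - 1 ≤ r)
    (a : Fin (r + 1) → ℕ → ℂ) (mks : Fin (r + 1) → Vil p → ℂ)
    (hmks : ∀ ν, IsWalshPolyOfOrder p n (a ν) (mks ν))
    (ν ν' : Fin (r + 1)) (ω : Vil p) :
    ∑ k ∈ Finset.range p,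
        mks ν (ω + deltaElt p k) * (starRingEnd ℂ) (mks ν' (ω + deltaElt p k))
      = ∑ k ∈ Finset.range p,
          polyphase p n (a ν) k (Ash p 1 ω) *
            (starRingEnd ℂ) (polyphase p n (a ν') k (Ash p 1 ω)) :=
  statement6_general p hp n hn r a mks hmks ν ν' ω

end Vilenkin
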